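/- Let s ≠ t be vertices of V such that some portal p satisfies s,t ∈ V(μ(p)), let p₀ be the s-t-portal, and let v be the neighbor of s on the unique path in T_{p₀} from s to t (the vertex to which the routing step sends the packet). Then v ∈ V(μ(p₀)), so p₀ is a candidate portal for the pair (v,t), and θ_c(s,t;p₀) ≥ θ_c(v,t;p₀) + |sv|_c. -/

import Mathlib

noncomputable section

/-- The Euclidean plane. -/
abbrev E2 : Type := EuclideanSpace ℝ (Fin 2)

/-- The unit disk graph on a finite set of sites `V ⊂ ℝ²`: two distinct sites are
adjacent iff their Euclidean distance is at most 1. -/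
def UDG (V : Finset E2) : SimpleGraph {x : E2 // x ∈ V} where
  Adj v w := v ≠ w ∧ dist v.1 w.1 ≤ 1
  symm := by
    constructor
    intro v w h
    exact ⟨h.1.symm, by rw [dist_comm]; exact h.2⟩
  loopless := by
    constructor
    intro v h
    exact h.1 rfl

/-- The weighted length of a walk: each edge `vw` has weight `dist v w`. -/
def walkLength {α : Type*} [PseudoMetricSpace α] {G : SimpleGraph α} {s t : α}
    (w : G.Walk s t) : ℝ :=
  (w.darts.map fun d => dist d.toProd.1 d.toProd.2).sum

/-- Weighted shortest-path distance in a graph whose vertices live in a metric space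
(each edge `vw` weighted by `dist v w`). -/
def wdist {α : Type*} [PseudoMetricSpace α] (G : SimpleGraph α) (s t : α) : ℝ :=
  sInf (Set.range fun w : G.Walk s t => walkLength w)

/-- Weighted shortest-path distance between two sites in the unit disk graph on `V`. -/
def udist (V : Finset E2) (s t : E2) : ℝ :=
  sInf {L | ∃ (hs : s ∈ V) (ht : t ∈ V) (w : (UDG V).Walk ⟨s, hs⟩ ⟨t, ht⟩), L = walkLength w}

/-- The (weighted) diameter of the unit disk graph on `V`. -/
def udiam (V : Finset E2) : ℝ :=
  sSup {r | ∃ s ∈ V, ∃ t ∈ V, r = udist V s t}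

/-- A decomposition tree `𝒯` for the unit disk graph on `V` (à la Chan–Skrepetos):
a rooted tree (given by a parent function together with a depth function witnessing
rootedness) whose every node `μ` carries sets `port μ ⊆ V(μ) ⊆ V` such that the
subgraph induced by `V(μ)` is connected, the root has `V(root) = V`, for an inner
node `μ` the sets `port μ, V(σ₁), …, V(σ_k)` (over the children `σᵢ` of `μ`) are
pairwise disjoint subsets of `V(μ)`, and every leaf `μ` has `V(μ) = port μ`. -/
structure DecompTree (V : Finset E2) where
  Node : Type
  [fintypeNode : Fintype Node]
  root : Node
  parent : Node → Node
  depth : Node → ℕ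
  parent_root : parent root = root
  depth_root : depth root = 0
  depth_parent : ∀ μ, μ ≠ root → depth μ = depth (parent μ) + 1
  vset : Node → Finset E2
  portals : Node → Finset E2
  portals_subset : ∀ μ, portals μ ⊆ vset μ
  vset_subset_V : ∀ μ, vset μ ⊆ V
  vset_connected : ∀ μ, (UDG (vset μ)).Connected
  vset_root : vset root = V
  child_vset_subset : ∀ σ, σ ≠ root → vset σ ⊆ vset (parent σ)
  portals_disjoint_child : ∀ σ, σ ≠ root → Disjoint (portals (parent σ)) (vset σ)
  siblings_disjoint : ∀ σ τ, σ ≠ root → τ ≠ root → σ ≠ τ → parent σ = parent τ →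
    Disjoint (vset σ) (vset τ)
  leaf_vset : ∀ μ, (∀ σ, σ ≠ root → parent σ ≠ μ) → vset μ = portals μ

attribute [instance] DecompTree.fintypeNode

/-- `p` is a portal whose node `μ` (i.e. `μ = μ(p)`) contains both `s` and `t` in its
vertex set: such a `p` is a candidate for the pair `(s,t)`. -/
def Candidate {V : Finset E2} (T : DecompTree V) (s t : E2) (μ : T.Node) (p : E2) : Prop :=
  p ∈ T.portals μ ∧ s ∈ T.vset μ ∧ t ∈ T.vset μ

/-- `θ(s,t) = min { d_{μ(p)}(s,p) + d_{μ(p)}(p,t) : p a portal with s,t ∈ V(μ(p)) }`,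
the distance approximation of the oracle of Chan and Skrepetos. -/
def thetaOracle {V : Finset E2} (T : DecompTree V) (s t : E2) : ℝ :=
  sInf {r | ∃ μ p, Candidate T s t μ p ∧ r = udist (T.vset μ) s p + udist (T.vset μ) p t}

/-- Additional data on a decomposition tree: a totally ordered identifier for every
vertex (injective on `V`), and for every portal `p` a shortest-path tree `T_p`
rooted at `p` spanning the subgraph induced by `V(μ(p))`, given by a parent function
`par p` together with a depth function `dep p` witnessing that every vertex of
`V(μ(p))` reaches the root `p`.  Every non-root vertex `v` of `T_p` has a parent
`u = par p v` adjacent to `v` with `d_{μ(p)}(p,v) = d_{μ(p)}(p,u) + |uv|`. -/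
structure SPTData {V : Finset E2} (T : DecompTree V) where
  ident : E2 → ℕ
  ident_injOn : Set.InjOn ident ↑V
  par : E2 → E2 → E2
  dep : E2 → E2 → ℕ
  par_self : ∀ p, par p p = p
  dep_self : ∀ p, dep p p = 0
  par_mem : ∀ μ : T.Node, ∀ p ∈ T.portals μ, ∀ v ∈ T.vset μ, v ≠ p →
    par p v ∈ T.vset μ
  par_adj : ∀ μ : T.Node, ∀ p ∈ T.portals μ, ∀ v ∈ T.vset μ, v ≠ p →
    par p v ≠ v ∧ dist (par p v) v ≤ 1
  par_shortest : ∀ μ : T.Node, ∀ p ∈ T.portals μ, ∀ v ∈ T.vset μ, v ≠ p →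
    udist (T.vset μ) p v = udist (T.vset μ) p (par p v) + dist (par p v) v
  dep_par : ∀ μ : T.Node, ∀ p ∈ T.portals μ, ∀ v ∈ T.vset μ, v ≠ p →
    dep p v = dep p (par p v) + 1
  dep_eq_zero : ∀ μ : T.Node, ∀ p ∈ T.portals μ, ∀ v ∈ T.vset μ, dep p v = 0 → v = p

/-- `x_c = ⌊x·c⌋`. -/
def floorc (c x : ℝ) : ℕ := ⌊x * c⌋₊

/-- `t` lies in the subtree `T_p(s)` rooted at `s` of the tree with parent function
`par`, i.e. `s` is an ancestor of `t`. -/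
def InSubtree (par : E2 → E2) (s t : E2) : Prop := ∃ k : ℕ, par^[k] t = s

open Classical in
/-- `θ_c(s,t;p) = d_{μ(p)}(t,p)_c + d_{μ(p)}(p,s)_c` if `t ∉ T_p(s)`, and
`θ_c(s,t;p) = d_{μ(p)}(t,p)_c − d_{μ(p)}(p,s)_c` if `t ∈ T_p(s)`.
Here `X = V(μ(p))` and `par` is the parent function of `T_p`. -/
def thetaCp (c : ℝ) (X : Finset E2) (par : E2 → E2) (p s t : E2) : ℕ :=
  if InSubtree par s t then floorc c (udist X t p) - floorc c (udist X p s)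
  else floorc c (udist X t p) + floorc c (udist X p s)

/-- `p₀` (with node `μ₀ = μ(p₀)`) is the `s`-`t`-portal: among all candidate portals
it lexicographically minimizes the pair `(θ_c(s,t;p), p_id)`. -/
def IsSTPortal {V : Finset E2} {T : DecompTree V} (S : SPTData T) (c : ℝ)
    (s t : E2) (μ₀ : T.Node) (p₀ : E2) : Prop :=
  Candidate T s t μ₀ p₀ ∧
  ∀ μ p, Candidate T s t μ p →
    thetaCp c (T.vset μ₀) (S.par p₀) p₀ s t < thetaCp c (T.vset μ) (S.par p) p s t ∨
    (thetaCp c (T.vset μ₀) (S.par p₀) p₀ s t = thetaCp c (T.vset μ) (S.par p) p s t ∧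
      S.ident p₀ ≤ S.ident p)

/-- `v` is the neighbor of `s` on the unique path in `T_{p₀}` from `s` to `t`
(for the tree with parent function `par = par p₀`): if `t ∈ T_{p₀}(s)`, then `v` is
the child of `s` whose subtree contains `t`; otherwise `v` is the parent of `s`. -/
def IsNextStep (par : E2 → E2) (s t v : E2) : Prop :=
  (InSubtree par s t ∧ par v = s ∧ InSubtree par v t) ∨
  (¬ InSubtree par s t ∧ v = par s)

/-- The routing step: from current vertex `s` with target `t` the packet is sent to
the neighbor of `s` on the unique path in `T_{p₀}` from `s` to `t`, where `p₀` is
the `s`-`t`-portal. -/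
def RouteStep {V : Finset E2} {T : DecompTree V} (S : SPTData T) (c : ℝ)
    (s t v : E2) : Prop :=
  ∃ μ₀ p₀, IsSTPortal S c s t μ₀ p₀ ∧ IsNextStep (S.par p₀) s t v

/-- The hop distance between `s` and `t` in the tree with parent function `par`:
the number of edges on the path between `s` and `t`. -/
def hopDist (par : E2 → E2) (s t : E2) : ℕ :=
  sInf {m | ∃ k l, k + l = m ∧ par^[k] s = par^[l] t}

section Aux

lemma udist_nonneg' (X : Finset E2) (a b : E2) : 0 ≤ udist X a b := by
  apply Real.sInf_nonneg
  rintro r ⟨ha, hb, w, rfl⟩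
  unfold walkLength
  apply List.sum_nonneg
  intro x hx
  simp only [List.mem_map] at hx
  obtain ⟨d, _, rfl⟩ := hx
  exact dist_nonneg

lemma walkLength_reverse {α : Type*} [PseudoMetricSpace α] {G : SimpleGraph α} {s t : α}
    (w : G.Walk s t) : walkLength w.reverse = walkLength w := by
  unfold walkLength
  rw [SimpleGraph.Walk.darts_reverse, List.map_reverse, List.sum_reverse, List.map_map]
  refine congrArg List.sum (List.map_congr_left ?_)
  intro d _
  simp [SimpleGraph.Dart.symm, dist_comm]

lemma udist_symm (X : Finset E2) (a b : E2) : udist X a b = udist X b a := by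
  unfold udist
  congr 1
  ext L
  constructor
  · rintro ⟨ha, hb, w, rfl⟩
    exact ⟨hb, ha, w.reverse, (walkLength_reverse w).symm⟩
  · rintro ⟨hb, ha, w, rfl⟩
    exact ⟨ha, hb, w.reverse, (walkLength_reverse w).symm⟩

lemma floorc_mono {c : ℝ} (hc : 0 ≤ c) {x y : ℝ} (h : x ≤ y) : floorc c x ≤ floorc c y :=
  Nat.floor_le_floor (mul_le_mul_of_nonneg_right h hc)

lemma floorc_superadd {c x y : ℝ} (hc : 0 ≤ c) (hx : 0 ≤ x) (hy : 0 ≤ y) :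
    floorc c x + floorc c y ≤ floorc c (x + y) := by
  unfold floorc
  rw [add_mul]
  apply Nat.le_floor
  push_cast
  exact add_le_add (Nat.floor_le (mul_nonneg hx hc)) (Nat.floor_le (mul_nonneg hy hc))

variable {V : Finset E2} {T : DecompTree V} (S : SPTData T) {μ₀ : T.Node} {p₀ : E2}

lemma par_mem_vset (hp : p₀ ∈ T.portals μ₀) {x : E2} (hx : x ∈ T.vset μ₀) :
    S.par p₀ x ∈ T.vset μ₀ := by
  by_cases h : x = p₀
  · subst h; rw [S.par_self]; exact T.portals_subset μ₀ hp
  · exact S.par_mem μ₀ p₀ hp x hx h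

lemma iterate_par_mem_vset (hp : p₀ ∈ T.portals μ₀) {x : E2} (hx : x ∈ T.vset μ₀) :
    ∀ k, (S.par p₀)^[k] x ∈ T.vset μ₀ := by
  intro k
  induction k with
  | zero => exact hx
  | succ n ih => rw [Function.iterate_succ_apply']; exact par_mem_vset S hp ih

/-- Everything in `V(μ(p₀))` lies in the subtree of the root `p₀`. -/
lemma insubtree_root (hp : p₀ ∈ T.portals μ₀) {x : E2} (hx : x ∈ T.vset μ₀) :
    InSubtree (S.par p₀) p₀ x := by
  suffices h : ∀ n, ∀ y, y ∈ T.vset μ₀ → S.dep p₀ y = n → (S.par p₀)^[n] y = p₀ by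
    exact ⟨S.dep p₀ x, h _ x hx rfl⟩
  intro n
  induction n with
  | zero =>
    intro y hy hd
    simpa using S.dep_eq_zero μ₀ p₀ hp y hy hd
  | succ n ih =>
    intro y hy hd
    have hyne : y ≠ p₀ := by
      intro h; subst h; rw [S.dep_self] at hd; exact Nat.succ_ne_zero n hd.symm
    have h1 := S.dep_par μ₀ p₀ hp y hy hyne
    rw [hd] at h1
    have h2 : S.dep p₀ (S.par p₀ y) = n := by omega
    rw [Function.iterate_succ_apply]
    exact ih _ (S.par_mem μ₀ p₀ hp y hy hyne) h2

/-- If `v` is an ancestor of `x` in the shortest-path tree, then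
`d(p₀, v) ≤ d(p₀, x)`. -/
lemma udist_ancestor (hp : p₀ ∈ T.portals μ₀) {v x : E2} (hx : x ∈ T.vset μ₀)
    (h : InSubtree (S.par p₀) v x) :
    udist (T.vset μ₀) p₀ v ≤ udist (T.vset μ₀) p₀ x := by
  obtain ⟨k, hk⟩ := h
  induction k generalizing x with
  | zero => simp at hk; subst hk; exact le_refl _
  | succ n ih =>
    by_cases hxp : x = p₀
    · subst hxp
      rw [Function.iterate_succ_apply, S.par_self] at hk
      exact ih hx hk
    · rw [Function.iterate_succ_apply] at hk
      have hmem := S.par_mem μ₀ p₀ hp x hx hxp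
      have h1 := ih hmem hk
      have h2 := S.par_shortest μ₀ p₀ hp x hx hxp
      have h3 : (0:ℝ) ≤ dist (S.par p₀ x) x := dist_nonneg
      linarith

end Aux

/-- Lemma `portal-remains-portal`, part for the optimal portal.
Let `s ≠ t` have at least one candidate portal, let `p₀` (with node `μ₀`) be the
`s`-`t`-portal, and let `v` be the neighbor of `s` on the unique path in `T_{p₀}`
from `s` to `t`.  Then `v ∈ V(μ(p₀))`, so `p₀` is a candidate for `(v,t)`, and
`θ_c(s,t;p₀) ≥ θ_c(v,t;p₀) + |sv|_c`. -/
theorem portal_remains_portal (V : Finset E2) (hconn : (UDG V).Connected)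
    (T : DecompTree V) (S : SPTData T) (c : ℝ) (hc : 0 < c)
    (s t v : E2) (hst : s ≠ t)
    (μ₀ : T.Node) (p₀ : E2)
    (hp₀ : IsSTPortal S c s t μ₀ p₀)
    (hv : IsNextStep (S.par p₀) s t v) :
    v ∈ T.vset μ₀ ∧
    thetaCp c (T.vset μ₀) (S.par p₀) p₀ v t + floorc c (dist s v) ≤
      thetaCp c (T.vset μ₀) (S.par p₀) p₀ s t := by
  obtain ⟨⟨hp, hs, ht⟩, -⟩ := hp₀
  set X := T.vset μ₀ with hX
  set par := S.par p₀ with hpar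
  have hc' : (0:ℝ) ≤ c := le_of_lt hc
  -- trivial case v = s
  by_cases hvs : v = s
  · subst hvs
    refine ⟨hs, ?_⟩
    simp [floorc, dist_self]
  rcases hv with ⟨hsub_st, hparv, hsub_vt⟩ | ⟨hnsub, hveq⟩
  · -- downward case: par v = s, t in subtree of v
    obtain ⟨k, hk⟩ := hsub_vt
    have hvX : v ∈ X := by rw [← hk]; exact iterate_par_mem_vset S hp ht k
    have hvp : v ≠ p₀ := by
      intro h
      apply hvs
      rw [← hparv, h, hpar, S.par_self]
    have hshort := S.par_shortest μ₀ p₀ hp v hvX hvp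
    rw [← hpar, hparv] at hshort
    -- hshort : udist X p₀ v = udist X p₀ s + dist s v
    refine ⟨hvX, ?_⟩
    unfold thetaCp
    rw [if_pos hsub_st, if_pos ⟨k, hk⟩]
    have hBle : floorc c (udist X p₀ v) ≤ floorc c (udist X t p₀) := by
      apply floorc_mono hc'
      rw [udist_symm X t p₀]
      exact udist_ancestor S hp ht ⟨k, hk⟩
    have hsup : floorc c (udist X p₀ s) + floorc c (dist s v) ≤ floorc c (udist X p₀ v) := by
      rw [hshort]
      exact floorc_superadd hc' (udist_nonneg' X p₀ s) dist_nonneg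
    omega
  · -- upward case: v = par s
    have hsp : s ≠ p₀ := by
      intro h
      exact hnsub (h ▸ insubtree_root S hp ht)
    have hvX : v ∈ X := by rw [hveq]; exact S.par_mem μ₀ p₀ hp s hs hsp
    have hshort := S.par_shortest μ₀ p₀ hp s hs hsp
    rw [← hpar, ← hveq] at hshort
    -- hshort : udist X p₀ s = udist X p₀ v + dist v s
    have hdist : dist v s = dist s v := dist_comm v s
    refine ⟨hvX, ?_⟩
    unfold thetaCp
    rw [if_neg hnsub]
    by_cases hvt : InSubtree par v t
    · rw [if_pos hvt]
      have hx_le : floorc c (dist s v) ≤ floorc c (udist X p₀ s) := by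
        apply floorc_mono hc'
        rw [← hdist]
        have := udist_nonneg' X p₀ v
        linarith
      have : floorc c (udist X t p₀) - floorc c (udist X p₀ v) ≤ floorc c (udist X t p₀) :=
        Nat.sub_le _ _
      omega
    · rw [if_neg hvt]
      have hsup : floorc c (udist X p₀ v) + floorc c (dist s v) ≤ floorc c (udist X p₀ s) := by
        rw [hshort, ← hdist]
        exact floorc_superadd hc' (udist_nonneg' X p₀ v) dist_nonneg
      omega
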